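/- For any information flow diagram I with KTS K and prohibition requirement ~P: K ⊢ ~P if and only if I ⊨ ~P, i.e., K ⊨_l ¬enc(P) over all finite paths iff no path of I has kind P. -/

import Mathlib

set_option autoImplicit true

section IFCIL

variable {N O S A Pr : Type}

/-- Node patterns: a concrete node or the wildcard `*`. -/
inductive NodePat (N : Type) where
  | star : NodePat N
  | node : N → NodePat N

/-- An arc of an information flow diagram: source, nonempty set of operations, target. -/
abbrev Arc (N O : Type) := N × Set O × N

/-- An information flow diagram `I = (N, ta, E)`. -/
structure IFD (N O : Type) where
  ta : N → Set N
  E : Set (Arc N O)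

/-- A node pattern `m` matches a node `n`: `m = *` or `n ∈ ta(m)`. -/
def NodePat.mat (I : IFD N O) : NodePat N → N → Prop
  | .star, _ => True
  | .node m, n => n ∈ I.ta m

/-- Consecutive arcs have matching endpoints. -/
def Chained : List (Arc N O) → Prop
  | [] => True
  | [_] => True
  | a :: b :: rest => a.2.2 = b.1 ∧ Chained (b :: rest)

/-- A path in `I`: nonempty, chained sequence of arcs of `I`. -/
def PathIn (I : IFD N O) (π : List (Arc N O)) : Prop :=
  π ≠ [] ∧ Chained π ∧ ∀ a ∈ π, a ∈ I.E

/-- Arrows: single step `>` or multi step `+>`. -/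
inductive Arrow where
  | single : Arrow
  | multi : Arrow

/-- Path kinds `P ::= n [o]> n' | n +[o]> n' | P₁ P₂`. -/
inductive Kind (N O : Type) where
  | atom : NodePat N → Arrow → Set O → NodePat N → Kind N O
  | comp : Kind N O → Kind N O → Kind N O

/-- The kind satisfaction relation `π ▷_I P`. -/
inductive KSat (I : IFD N O) : List (Arc N O) → Kind N O → Prop where
  | step : NodePat.mat I m n → NodePat.mat I m' n' → (o ∩ o').Nonempty →
      KSat I [(n, o, n')] (.atom m .single o' m')
  | plusBase : KSat I [(n, o, n')] (.atom m .single o' m') →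
      KSat I [(n, o, n')] (.atom m .multi o' m')
  | plusStep : KSat I [(n, o, n')] (.atom m .single o' .star) →
      KSat I π (.atom .star .multi o' m') →
      KSat I ((n, o, n') :: π) (.atom m .multi o' m')
  | comp : KSat I π₁ P₁ → KSat I π₂ P₂ → KSat I (π₁ ++ π₂) (.comp P₁ P₂)

/-- Node refinement: `n ⪯_n n` and `n ⪯_n *`. -/
def NRef : NodePat N → NodePat N → Prop := fun a b => a = b ∨ b = .star

/-- Arrow refinement: reflexivity and `> ⪯_a +>`. -/
inductive ARef : Arrow → Arrow → Prop where
  | refl (a) : ARef a a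
  | up : ARef .single .multi

/-- Kind refinement `⪯_P`: rules (comp), (P-1)–(P-4), closed under reflexivity
and transitivity. -/
inductive KRef : Kind N O → Kind N O → Prop where
  | refl (P) : KRef P P
  | trans : KRef P Q → KRef Q R → KRef P R
  | comp : KRef P₁ P₁' → KRef P₂ P₂' → KRef (.comp P₁ P₂) (.comp P₁' P₂')
  | atom : NRef n₁ n₁' → NRef n₂ n₂' → ARef w w' → o ⊆ o' →
      KRef (.atom n₁ w o n₂) (.atom n₁' w' o' n₂')
  | p2 : NRef n₁ n₁' → NRef n₂ n₂' → o₁ ⊆ o₁' → o₁ ⊆ o₂' → o₂ ⊆ o₂' →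
      KRef (.comp (.atom n₁ .multi o₁ .star) (.atom .star .single o₂ n₂))
           (.comp (.atom n₁' .single o₁' .star) (.atom .star .multi o₂' n₂'))
  | p3 : NRef n₁ n₁' → NRef n₂ n₂' → o₁ ⊆ o' → o₂ ⊆ o' →
      KRef (.comp (.atom n₁ .multi o₁ .star) (.atom .star .multi o₂ n₂))
           (.atom n₁' .multi o' n₂')
  | p4 : NRef n₁ n₁' → NRef n₂ n₂' → o₁ ⊆ o₁' → o₂ ⊆ o₂' → o₂ ⊆ o₁' →
      KRef (.comp (.atom n₁ .single o₁ .star) (.atom .star .multi o₂ n₂))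
           (.comp (.atom n₁' .multi o₁' .star) (.atom .star .single o₂' n₂'))

/-- IFL requirements `R ::= P | ~P | P : P'`. -/
inductive Req (N O : Type) where
  | ex : Kind N O → Req N O
  | no : Kind N O → Req N O
  | constr : Kind N O → Kind N O → Req N O

/-- Validity `I ⊨ R`. -/
def Valid (I : IFD N O) : Req N O → Prop
  | .ex P => ∃ π, PathIn I π ∧ KSat I π P
  | .no P => ¬ ∃ π, PathIn I π ∧ KSat I π P
  | .constr P P' => ∀ π, PathIn I π → KSat I π P → KSat I π P'

/-- Requirement refinement `⪯`: rules (R-1)–(R-3), closed under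
reflexivity and transitivity. -/
inductive RRef : Req N O → Req N O → Prop where
  | refl (R) : RRef R R
  | trans : RRef R₁ R₂ → RRef R₂ R₃ → RRef R₁ R₃
  | ex : KRef P P' → RRef (.ex P) (.ex P')
  | no : KRef P P' → RRef (.no P') (.no P)
  | constr : KRef P₁ P₁' → KRef P₂ P₂' → RRef (.constr P₁' P₂) (.constr P₁ P₂')

/-- The equivalent, right-linear grammar of kinds:
`P ::= n [o]> n' | n +[o]> n' | (n [o]> n') P | (n +[o]> n') P`. -/
inductive LKind (N O : Type) where
  | step : NodePat N → Set O → NodePat N → LKind N O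
  | plus : NodePat N → Set O → NodePat N → LKind N O
  | stepC : NodePat N → Set O → NodePat N → LKind N O → LKind N O
  | plusC : NodePat N → Set O → NodePat N → LKind N O → LKind N O

/-- Kind satisfaction `π ▷_I P` for the right-linear grammar. -/
inductive LSat (I : IFD N O) : List (Arc N O) → LKind N O → Prop where
  | step : NodePat.mat I m n → NodePat.mat I m' n' → (o ∩ o').Nonempty →
      LSat I [(n, o, n')] (.step m o' m')
  | plusBase : LSat I [(n, o, n')] (.step m o' m') →
      LSat I [(n, o, n')] (.plus m o' m')
  | plusStep : LSat I [(n, o, n')] (.step m o' .star) →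
      LSat I π (.plus .star o' m') →
      LSat I ((n, o, n') :: π) (.plus m o' m')
  | stepC : LSat I [(n, o, n')] (.step m o' .star) → LSat I π P →
      LSat I ((n, o, n') :: π) (.stepC m o' m' P)
  | plusCBase : LSat I π (.stepC m o' m' P) → LSat I π (.plusC m o' m' P)
  | plusCStep : LSat I [(n, o, n')] (.step m o' .star) →
      LSat I π (.plusC .star o' .star P) →
      LSat I ((n, o, n') :: π) (.plusC m o' m' P)

/-- LTL formulas over atomic propositions `Pr` and actions `A`;
`acts o` stands for the disjunction `⋁_{op ∈ o} (op)`. -/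
inductive LTL (Pr A : Type) where
  | tt : LTL Pr A
  | atom : Pr → LTL Pr A
  | acts : Set A → LTL Pr A
  | and : LTL Pr A → LTL Pr A → LTL Pr A
  | or : LTL Pr A → LTL Pr A → LTL Pr A
  | not : LTL Pr A → LTL Pr A
  | next : LTL Pr A → LTL Pr A
  | untl : LTL Pr A → LTL Pr A → LTL Pr A

/-- A finite KTS path: a state followed by a list of (action, state) steps. -/
structure FinPath (S A : Type) where
  first : S
  rest : List (A × S)

/-- Drop the first `k` transitions of a finite path. -/
def FinPath.drop : FinPath S A → ℕ → FinPath S A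
  | w, 0 => w
  | ⟨s, []⟩, _ + 1 => ⟨s, []⟩
  | ⟨_, (_, s') :: r⟩, k + 1 => FinPath.drop ⟨s', r⟩ k

/-- Finite-path LTL semantics `w ⊨_l φ` with labeling `L`. -/
def FSat (L : S → Set Pr) : LTL Pr A → FinPath S A → Prop
  | .tt, _ => True
  | .atom p, w => p ∈ L w.first
  | .acts o, w => ∃ a s r, w.rest = (a, s) :: r ∧ a ∈ o
  | .and φ ψ, w => FSat L φ w ∧ FSat L ψ w
  | .or φ ψ, w => FSat L φ w ∨ FSat L ψ w
  | .not φ, w => ¬ FSat L φ w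
  | .next φ, w => ∃ a s r, w.rest = (a, s) :: r ∧ FSat L φ ⟨s, r⟩
  | .untl φ ψ, w => ∃ k, k ≤ w.rest.length ∧ FSat L ψ (w.drop k) ∧
      ∀ j < k, FSat L φ (w.drop j)

/-- The LTL encoding `enc(P)` of flow kinds (finite-path version,
with end marker `¬X(true)`). -/
def encK : LKind N O → LTL (NodePat N) O
  | .step n o n' =>
      .and (.atom n) (.and (.acts o) (.next (.and (.atom n') (.not (.next .tt)))))
  | .plus n o n' =>
      .and (.atom n) (.and (.acts o)
        (.next (.untl (.acts o) (.and (.atom n') (.not (.next .tt))))))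
  | .stepC n o _ P => .and (.atom n) (.and (.acts o) (.next (encK P)))
  | .plusC n o _ P =>
      .and (.atom n) (.and (.acts o) (.next (.untl (.acts o) (encK P))))

/-- The labeling `Λ` of the KTS of `I`: `M ∈ Λ(n)` iff `n ∈ ta(M)`
(with the wildcard true everywhere). -/
def labelOf (I : IFD N O) : N → Set (NodePat N) :=
  fun n => {p | NodePat.mat I p n}

/-- `encRest π r`: the steps `r` traverse the arcs `π` choosing one
operation from each arc's operation set. -/
def encRest : List (Arc N O) → List (O × N) → Prop
  | [], [] => True
  | (_, o, n') :: π, (op, s) :: r => op ∈ o ∧ s = n' ∧ encRest π r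
  | _, _ => False

/-- `w ∈ enc(π)` : the KTS path `w` results from the diagram path `π`
by choosing one operation from each arc's operation set. -/
def encPath (π : List (Arc N O)) (w : FinPath N O) : Prop :=
  match π with
  | [] => False
  | (n, _, _) :: _ => w.first = n ∧ encRest π w.rest

/-- Auxiliary for `π_w`. -/
def diagOf : N → List (O × N) → List (Arc N O)
  | _, [] => []
  | s, (op, s') :: r => (s, ({op} : Set O), s') :: diagOf s' r

/-- `π_w`: the diagram path obtained from a KTS path by replacing each
action `op` with the singleton `{op}`. -/
def FinPath.toDiagram (w : FinPath N O) : List (Arc N O) := diagOf w.first w.rest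

/-- A transition of the KTS of `I`: `E' = {(n, op, n') | (n,o,n') ∈ E, op ∈ o}`. -/
def ktsStep (I : IFD N O) (s : N) (op : O) (s' : N) : Prop :=
  ∃ o, (s, o, s') ∈ I.E ∧ op ∈ o

def ktsRest (I : IFD N O) : N → List (O × N) → Prop
  | _, [] => True
  | s, (op, s') :: r => ktsStep I s op s' ∧ ktsRest I s' r

/-- `w` is a (finite) path of the KTS of `I`. -/
def KTSPath (I : IFD N O) (w : FinPath N O) : Prop := ktsRest I w.first w.rest

/-- `K ⊨_l φ`: every finite path of the KTS of `I` satisfies `φ`. -/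
def KModels (I : IFD N O) (φ : LTL (NodePat N) O) : Prop :=
  ∀ w, KTSPath I w → FSat (labelOf I) φ w

/-- IFL requirements over right-linear kinds. -/
inductive LReq (N O : Type) where
  | ex : LKind N O → LReq N O
  | no : LKind N O → LReq N O
  | constr : LKind N O → LKind N O → LReq N O

/-- Validity `I ⊨ R` for right-linear requirements. -/
def LValid (I : IFD N O) : LReq N O → Prop
  | .ex P => ∃ π, PathIn I π ∧ LSat I π P
  | .no P => ¬ ∃ π, PathIn I π ∧ LSat I π P
  | .constr P P' => ∀ π, PathIn I π → LSat I π P → LSat I π P'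

/-- Satisfaction `K ⊢ R` in the finite-path KTS semantics. -/
def KEnt (I : IFD N O) : LReq N O → Prop
  | .ex P => ¬ KModels I (.not (encK P))
  | .no P => KModels I (.not (encK P))
  | .constr P P' => KModels I (.or (.not (encK P)) (encK P'))

/-- Infinite KTS paths. -/
structure InfPath (S A : Type) where
  state : ℕ → S
  act : ℕ → A

def InfPath.drop (w : InfPath S A) (k : ℕ) : InfPath S A :=
  ⟨fun i => w.state (i + k), fun i => w.act (i + k)⟩

/-- Infinite-path LTL semantics. -/
def ISat (L : S → Set Pr) : LTL Pr A → InfPath S A → Prop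
  | .tt, _ => True
  | .atom p, w => p ∈ L (w.state 0)
  | .acts o, w => w.act 0 ∈ o
  | .and φ ψ, w => ISat L φ w ∧ ISat L ψ w
  | .or φ ψ, w => ISat L φ w ∨ ISat L ψ w
  | .not φ, w => ¬ ISat L φ w
  | .next φ, w => ISat L φ (w.drop 1)
  | .untl φ ψ, w => ∃ k, ISat L ψ (w.drop k) ∧ ∀ j < k, ISat L φ (w.drop j)

/-- Atomic propositions for the sink-extended KTS: node patterns plus
the distinguished proposition `ι`. -/
abbrev SProp (N : Type) := NodePat N ⊕ Unit

/-- Labeling of the sink-extended KTS: the sink (`none`) is labeled only by `ι`. -/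
def labelι (I : IFD N O) : Option N → Set (SProp N)
  | some n => {p | ∃ q, p = Sum.inl q ∧ NodePat.mat I q n}
  | none => {Sum.inr ()}

/-- The encoding `enc_ι(P)` of flow kinds for the sink-extended KTS:
identical to `enc` except that `¬X(true)` is replaced by `X(ι)`. -/
def encι : LKind N O → LTL (SProp N) O
  | .step n o n' =>
      .and (.atom (.inl n)) (.and (.acts o)
        (.next (.and (.atom (.inl n')) (.next (.atom (.inr ()))))))
  | .plus n o n' =>
      .and (.atom (.inl n)) (.and (.acts o)
        (.next (.untl (.acts o) (.and (.atom (.inl n')) (.next (.atom (.inr ())))))))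
  | .stepC n o _ P => .and (.atom (.inl n)) (.and (.acts o) (.next (encι P)))
  | .plusC n o _ P =>
      .and (.atom (.inl n)) (.and (.acts o) (.next (.untl (.acts o) (encι P))))

/-- The states of a finite path. -/
def FinPath.states (w : FinPath S A) : List S := w.first :: w.rest.map Prod.snd

/-- `w·ι^ω`: the finite path `w` followed by the sink forever
(with arbitrary operation labels `ops` into `ι`). -/
def appendSink (w : FinPath N O) (ops : ℕ → O) : InfPath (Option N) O where
  state := fun i => w.states[i]?
  act := fun i => if h : i < w.rest.length then (w.rest.get ⟨i, h⟩).1 else ops i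

/-- Transitions of the sink-extended KTS `K_ι`: the transitions of `K`,
transitions from every state to the sink with every operation, and the
self-loop on the sink. -/
def sinkStep (I : IFD N O) : Option N → O → Option N → Prop
  | some s, op, some s' => ktsStep I s op s'
  | _, _, none => True
  | none, _, some _ => False

/-- `w` is an infinite path of the sink-extended KTS `K_ι`. -/
def KιPath (I : IFD N O) (w : InfPath (Option N) O) : Prop :=
  ∀ i, sinkStep I (w.state i) (w.act i) (w.state (i + 1))

/-- `K_ι ⊨_l φ`: every infinite path of `K_ι` satisfies `φ`. -/
def KιModels (I : IFD N O) (φ : LTL (SProp N) O) : Prop :=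
  ∀ w, KιPath I w → ISat (labelι I) φ w

/-- Satisfaction `K_ι ⊢ R` in the infinite-path, sink-extended semantics. -/
def KιEnt (I : IFD N O) : LReq N O → Prop
  | .ex P => ¬ KιModels I (.not (encι P))
  | .no P => KιModels I (.not (encι P))
  | .constr P P' => KιModels I (.or (.not (encι P)) (encι P'))

/-- The leading node constraint of a kind. -/
def LKind.firstNode : LKind N O → NodePat N
  | .step n _ _ => n
  | .plus n _ _ => n
  | .stepC n _ _ _ => n
  | .plusC n _ _ _ => n

/-- The leading operation set of a kind. -/
def LKind.firstOps : LKind N O → Set O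
  | .step _ o _ => o
  | .plus _ o _ => o
  | .stepC _ o _ _ => o
  | .plusC _ o _ _ => o

end IFCIL

/-
A KTS path satisfies `enc(P)` exactly when it arises from a diagram path `π ▷_I P` by picking
on each arc an operation shared by the arc and by the atom of `P` that the arc matches. Both
satisfaction relations unfold a multi-step atom `n +[o]> n'` the same way, into
`n [o]> n'` or `(n [o]> *) (* +[o]> n')`, so the correspondence follows by induction on the path.
-/

section Correctness

variable {N O S A Pr : Type} {I : IFD N O}

theorem FinPath.drop_zero (w : FinPath S A) : w.drop 0 = w := by
  rcases w with ⟨s, _ | ⟨⟨a, s'⟩, r⟩⟩ <;> rfl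

theorem fsat_untl_iff {L : S → Set Pr} {φ ψ : LTL Pr A} {s : S} {r : List (A × S)} :
    FSat L (.untl φ ψ) ⟨s, r⟩ ↔ FSat L ψ ⟨s, r⟩ ∨
      FSat L φ ⟨s, r⟩ ∧
        ∃ a s' r', r = (a, s') :: r' ∧ FSat L (.untl φ ψ) ⟨s', r'⟩ := by
  constructor
  · rintro ⟨_ | k, hk, hψ, hφ⟩
    · rw [FinPath.drop_zero] at hψ
      exact .inl hψ
    · dsimp only at hk
      obtain ⟨⟨a, s'⟩, r', rfl⟩ := List.exists_cons_of_length_pos (l := r) (by omega)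
      have hφ0 := hφ 0 k.succ_pos
      rw [FinPath.drop_zero] at hφ0
      exact .inr ⟨hφ0, a, s', r', rfl, k, by simpa using hk, hψ,
        fun j hj => hφ (j + 1) (by omega)⟩
  · rintro (hψ | ⟨hφ, a, s', r', rfl, k, hk, hψ, hφ'⟩)
    · exact ⟨0, Nat.zero_le _, by rwa [FinPath.drop_zero], nofun⟩
    · refine ⟨k + 1, by simpa using hk, hψ, fun j hj => ?_⟩
      cases j with
      | zero => rwa [FinPath.drop_zero]
      | succ j => exact hφ' j (by omega)

theorem exists_cons_of_fsat_encK {P : LKind N O} {w : FinPath N O}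
    (h : FSat (labelOf I) (encK P) w) : ∃ a s r, w.rest = (a, s) :: r := by
  cases P <;> obtain ⟨-, ⟨a, s, r, hr, -⟩, -⟩ := h <;> exact ⟨a, s, r, hr⟩

theorem fsat_not_next_tt_iff {L : S → Set Pr} {s : S} {r : List (A × S)} :
    FSat L (.not (.next .tt)) ⟨s, r⟩ ↔ r = [] := by
  rcases r with _ | ⟨⟨a, s'⟩, r⟩ <;> simp [FSat]

theorem fsat_encK_step_iff {m m' : NodePat N} {o : Set O} {s : N} {r : List (O × N)} :
    FSat (labelOf I) (encK (.step m o m')) ⟨s, r⟩ ↔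
      ∃ a s', r = [(a, s')] ∧ m.mat I s ∧ a ∈ o ∧ m'.mat I s' := by
  constructor
  · rintro ⟨hm, ⟨a, s', r', rfl, ha⟩, _, _, _, ⟨⟩, hm', hend⟩
    obtain rfl := fsat_not_next_tt_iff.1 hend
    exact ⟨a, s', rfl, hm, ha, hm'⟩
  · rintro ⟨a, s', rfl, hm, ha, hm'⟩
    exact ⟨hm, ⟨a, s', [], rfl, ha⟩, a, s', [], rfl, hm', fsat_not_next_tt_iff.2 rfl⟩

theorem fsat_encK_stepC_iff {m m' : NodePat N} {o : Set O} {P : LKind N O} {s : N}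
    {r : List (O × N)} :
    FSat (labelOf I) (encK (.stepC m o m' P)) ⟨s, r⟩ ↔
      ∃ a s' r', r = (a, s') :: r' ∧ m.mat I s ∧ a ∈ o ∧
        FSat (labelOf I) (encK P) ⟨s', r'⟩ := by
  constructor
  · rintro ⟨hm, ⟨a, s', r', rfl, ha⟩, _, _, _, ⟨⟩, hP⟩
    exact ⟨a, s', r', rfl, hm, ha, hP⟩
  · rintro ⟨a, s', r', rfl, hm, ha, hP⟩
    exact ⟨hm, ⟨a, s', r', rfl, ha⟩, a, s', r', rfl, hP⟩

theorem fsat_next_untl_unfold {p : NodePat N} {o : Set O} {ψ : LTL (NodePat N) O}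
    {w : FinPath N O} :
    FSat (labelOf I) (.and (.atom p) (.and (.acts o) (.next (.untl (.acts o) ψ)))) w ↔
      FSat (labelOf I) (.and (.atom p) (.and (.acts o) (.next ψ))) w ∨
      FSat (labelOf I) (.and (.atom p) (.and (.acts o)
        (.next (.and (.atom .star) (.and (.acts o) (.next (.untl (.acts o) ψ))))))) w := by
  constructor
  · rintro ⟨hp, ha, a, s, r, hr, hu⟩
    rcases fsat_untl_iff.1 hu with hψ | hstep
    · exact .inl ⟨hp, ha, a, s, r, hr, hψ⟩
    · exact .inr ⟨hp, ha, a, s, r, hr, trivial, hstep⟩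
  · rintro (⟨hp, ha, a, s, r, hr, hψ⟩ | ⟨hp, ha, a, s, r, hr, -, hstep⟩)
    · exact ⟨hp, ha, a, s, r, hr, fsat_untl_iff.2 (.inl hψ)⟩
    · exact ⟨hp, ha, a, s, r, hr, fsat_untl_iff.2 (.inr hstep)⟩

theorem fsat_encK_plus_iff {m m' : NodePat N} {o : Set O} {w : FinPath N O} :
    FSat (labelOf I) (encK (.plus m o m')) w ↔ FSat (labelOf I) (encK (.step m o m')) w ∨
      FSat (labelOf I) (encK (.stepC m o .star (.plus .star o m'))) w :=
  fsat_next_untl_unfold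

theorem fsat_encK_plusC_iff {m m' : NodePat N} {o : Set O} {P : LKind N O} {w : FinPath N O} :
    FSat (labelOf I) (encK (.plusC m o m' P)) w ↔ FSat (labelOf I) (encK (.stepC m o m' P)) w ∨
      FSat (labelOf I) (encK (.stepC m o .star (.plusC .star o .star P))) w :=
  fsat_next_untl_unfold

theorem encRest_nil_left_iff {r : List (O × N)} : encRest [] r ↔ r = [] := by
  cases r <;> simp [encRest]

theorem encRest_nil_right_iff {π : List (Arc N O)} : encRest π [] ↔ π = [] := by
  rcases π with _ | ⟨⟨n, o, n'⟩, π⟩ <;> simp [encRest]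

theorem LSat.ne_nil {π : List (Arc N O)} {P : LKind N O} (h : LSat I π P) : π ≠ [] := by
  induction h <;> simp_all

theorem lsat_step_iff {n n' : N} {o o' : Set O} {π : List (Arc N O)} {m m' : NodePat N} :
    LSat I ((n, o, n') :: π) (.step m o' m') ↔
      π = [] ∧ m.mat I n ∧ m'.mat I n' ∧ (o ∩ o').Nonempty := by
  constructor
  · intro h
    cases h with
    | step hm hm' ho => exact ⟨rfl, hm, hm', ho⟩
  · rintro ⟨rfl, hm, hm', ho⟩
    exact .step hm hm' ho

theorem lsat_stepC_iff {n n' : N} {o o' : Set O} {π : List (Arc N O)} {m m' : NodePat N}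
    {P : LKind N O} :
    LSat I ((n, o, n') :: π) (.stepC m o' m' P) ↔
      (m.mat I n ∧ (o ∩ o').Nonempty) ∧ LSat I π P := by
  constructor
  · intro h
    cases h with
    | stepC h hP =>
      obtain ⟨-, hm, -, ho⟩ := lsat_step_iff.1 h
      exact ⟨⟨hm, ho⟩, hP⟩
  · rintro ⟨⟨hm, ho⟩, hP⟩
    exact .stepC (.step hm trivial ho) hP

theorem lsat_plus_iff {π : List (Arc N O)} {m m' : NodePat N} {o : Set O} :
    LSat I π (.plus m o m') ↔
      LSat I π (.step m o m') ∨ LSat I π (.stepC m o .star (.plus .star o m')) := by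
  constructor
  · intro h
    cases h with
    | plusBase h => exact .inl h
    | plusStep h₁ h₂ => exact .inr (.stepC h₁ h₂)
  · rintro (h | h)
    · cases h with
      | step hm hm' ho => exact .plusBase (.step hm hm' ho)
    · cases h with
      | stepC h₁ h₂ => exact .plusStep h₁ h₂

theorem lsat_plusC_iff {π : List (Arc N O)} {m m' : NodePat N} {o : Set O} {P : LKind N O} :
    LSat I π (.plusC m o m' P) ↔
      LSat I π (.stepC m o m' P) ∨ LSat I π (.stepC m o .star (.plusC .star o .star P)) := by
  constructor
  · intro h
    cases h with
    | plusCBase h => exact .inl h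
    | plusCStep h₁ h₂ => exact .inr (.stepC h₁ h₂)
  · rintro (h | h)
    · exact .plusCBase h
    · cases h with
      | stepC h₁ h₂ => exact .plusCStep h₁ h₂

theorem lsat_cons_iff_of_tail {n n' : N} {o : Set O} {π : List (Arc N O)}
    (htail : ∀ Q, LSat I π Q ↔ ∃ r, encRest π r ∧ FSat (labelOf I) (encK Q) ⟨n', r⟩)
    (P : LKind N O) :
    LSat I ((n, o, n') :: π) P ↔
      ∃ r, encRest ((n, o, n') :: π) r ∧ FSat (labelOf I) (encK P) ⟨n, r⟩ := by
  have hstep : ∀ m o' m', LSat I ((n, o, n') :: π) (.step m o' m') ↔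
      ∃ r, encRest ((n, o, n') :: π) r ∧
        FSat (labelOf I) (encK (.step m o' m')) ⟨n, r⟩ := by
    intro m o' m'
    simp only [lsat_step_iff, fsat_encK_step_iff, Set.Nonempty, Set.mem_inter_iff]
    constructor
    · rintro ⟨rfl, hm, hm', a, ha, ha'⟩
      exact ⟨[(a, n')], ⟨ha, rfl, trivial⟩, a, n', rfl, hm, ha', hm'⟩
    · rintro ⟨_, hr, a, s', rfl, hm, ha', hm'⟩
      obtain ⟨ha, rfl, hπ⟩ := hr
      exact ⟨encRest_nil_right_iff.1 hπ, hm, hm', a, ha, ha'⟩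
  have hstepC : ∀ m o' m' Q, LSat I ((n, o, n') :: π) (.stepC m o' m' Q) ↔
      ∃ r, encRest ((n, o, n') :: π) r ∧
        FSat (labelOf I) (encK (.stepC m o' m' Q)) ⟨n, r⟩ := by
    intro m o' m' Q
    simp only [lsat_stepC_iff, fsat_encK_stepC_iff, htail, Set.Nonempty, Set.mem_inter_iff]
    constructor
    · rintro ⟨⟨hm, a, ha, ha'⟩, r, hr, hQ⟩
      exact ⟨(a, n') :: r, ⟨ha, rfl, hr⟩, a, n', r, rfl, hm, ha', hQ⟩
    · rintro ⟨_, hr, a, s', r, rfl, hm, ha', hQ⟩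
      obtain ⟨ha, rfl, hr⟩ := hr
      exact ⟨⟨hm, a, ha, ha'⟩, r, hr, hQ⟩
  cases P with
  | step m o' m' => exact hstep m o' m'
  | stepC m o' m' Q => exact hstepC m o' m' Q
  | plus m o' m' =>
    simp only [lsat_plus_iff, fsat_encK_plus_iff, and_or_left, exists_or, hstep, hstepC]
  | plusC m o' m' Q =>
    simp only [lsat_plusC_iff, fsat_encK_plusC_iff, and_or_left, exists_or, hstepC]

theorem lsat_cons_iff_exists_encRest {n n' : N} {o : Set O} {π : List (Arc N O)}
    (hch : Chained ((n, o, n') :: π)) (P : LKind N O) :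
    LSat I ((n, o, n') :: π) P ↔
      ∃ r, encRest ((n, o, n') :: π) r ∧ FSat (labelOf I) (encK P) ⟨n, r⟩ := by
  induction π generalizing n o n' P with
  | nil =>
    refine lsat_cons_iff_of_tail (fun Q => ⟨fun h => absurd rfl h.ne_nil, ?_⟩) P
    rintro ⟨r, hr, hQ⟩
    obtain ⟨a, s, r', rfl⟩ := exists_cons_of_fsat_encK hQ
    exact absurd (encRest_nil_left_iff.1 hr) (List.cons_ne_nil _ _)
  | cons arc π ih =>
    obtain ⟨n₁, o₁, n₁'⟩ := arc
    -- `LSat` reads the tail at the source of its first arc, the KTS path at the target `n'`.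
    obtain ⟨rfl, hch'⟩ : n' = n₁ ∧ Chained ((n₁, o₁, n₁') :: π) := hch
    exact lsat_cons_iff_of_tail (ih hch') P

theorem ktsRest_of_encRest {r : List (O × N)} :
    ∀ {n n' : N} {o : Set O} {π : List (Arc N O)}, Chained ((n, o, n') :: π) →
      (∀ a ∈ (n, o, n') :: π, a ∈ I.E) → encRest ((n, o, n') :: π) r →
        ktsRest I n r := by
  induction r with
  | nil => intros; trivial
  | cons step r ih =>
    intro n n' o π hch hE hr
    obtain ⟨a, s⟩ := step
    obtain ⟨ha, rfl, hr⟩ := hr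
    refine ⟨⟨o, hE _ List.mem_cons_self, ha⟩, ?_⟩
    rcases π with _ | ⟨⟨n₁, o₁, n₁'⟩, π⟩
    · rw [encRest_nil_left_iff.1 hr]
      trivial
    · obtain ⟨rfl, hch'⟩ : s = n₁ ∧ Chained ((n₁, o₁, n₁') :: π) := hch
      exact ih hch' (fun b hb => hE b (List.mem_cons_of_mem _ hb)) hr

theorem exists_pathIn_encRest_of_ktsRest {r : List (O × N)} :
    ∀ {s s' : N} {a : O}, ktsRest I s ((a, s') :: r) →
      ∃ o π, PathIn I ((s, o, s') :: π) ∧ encRest ((s, o, s') :: π) ((a, s') :: r) := by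
  induction r with
  | nil =>
    rintro s s' a ⟨⟨o, hE, ha⟩, -⟩
    exact ⟨o, [], ⟨List.cons_ne_nil _ _, trivial, by simpa using hE⟩, ha, rfl, trivial⟩
  | cons step r ih =>
    rintro s s' a ⟨⟨o, hE, ha⟩, h⟩
    obtain ⟨o₁, π, ⟨-, hch, hE'⟩, hr⟩ := ih h
    refine ⟨o, _ :: π, ⟨List.cons_ne_nil _ _, ⟨rfl, hch⟩, ?_⟩, ha, rfl, hr⟩
    exact List.forall_mem_cons.2 ⟨hE, hE'⟩

end Correctness

/-- For any information flow diagram `I` with KTS `K` and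
prohibition requirement `~P`: `K ⊢ ~P` iff `I ⊨ ~P`; i.e., `K ⊨_l ¬enc(P)`
over all finite paths iff no path of `I` has kind `P`. -/
theorem correctness_prohibition {N O : Type} (I : IFD N O) (P : LKind N O) :
    KModels I (.not (encK P)) ↔ ¬ ∃ π, PathIn I π ∧ LSat I π P := by
  constructor
  · rintro hK ⟨_ | ⟨⟨n, o, n'⟩, π⟩, ⟨hne, hch, hE⟩, hP⟩
    · exact hne rfl
    obtain ⟨r, hr, hfs⟩ := (lsat_cons_iff_exists_encRest hch P).1 hP
    exact hK ⟨n, r⟩ (ktsRest_of_encRest hch hE hr) hfs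
  · rintro hI ⟨s, r⟩ hw hfs
    obtain ⟨a, s', r, rfl⟩ := exists_cons_of_fsat_encK hfs
    obtain ⟨o, π, hπ, hr⟩ := exists_pathIn_encRest_of_ktsRest hw
    exact hI ⟨_, hπ, (lsat_cons_iff_exists_encRest hπ.2.1 P).2 ⟨_, hr, hfs⟩⟩
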